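/- arXiv:2206.03851 — 2 statements merged into one kernel-verified Lean document; each statement's English description precedes it below -/
import Mathlib

section
/- Let P and Q be distributions on Z, let f be a hypothesis, and let g (resp. k) be the labeling function under Q (resp. P), all with values in [0,1]. Define L_P(f,g) = E_P[|f − g|] and similarly for other pairs. Then L_Q(f,g) ≤ L_P(f,k) + (1/2) d_{HΔH}(P,Q) + min{ E_P[|k − g|], E_Q[|k − g|] }, where d_{HΔH} is the HΔH-divergence of a hypothesis class H containing f, g, k as (measurable) functions whose pairwise disagreement losses are bounded by the divergence. -/
open MeasureTheory

theorem integral_abs_sub_le_add {α : Type*} [MeasurableSpace α] {μ : Measure α}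
    {u v w : α → ℝ} (huw : Integrable (u - w) μ) (hwv : Integrable (w - v) μ) :
    ∫ x, |u x - v x| ∂μ ≤ (∫ x, |u x - w x| ∂μ) + ∫ x, |w x - v x| ∂μ := by
  have huv : Integrable (u - v) μ := by simpa only [sub_add_sub_cancel] using huw.add hwv
  calc ∫ x, |u x - v x| ∂μ ≤ ∫ x, (|u x - w x| + |w x - v x|) ∂μ :=
        integral_mono huv.abs (huw.abs.add hwv.abs) fun x => abs_sub_le _ _ _
    _ = _ := integral_add huw.abs hwv.abs

theorem multitask_core_bound_general {Z : Type*} [MeasurableSpace Z]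
    (P Q : Measure Z) [IsProbabilityMeasure P] [IsProbabilityMeasure Q]
    (f g k : Z → ℝ)
    (hf : Measurable f) (hg : Measurable g) (hk : Measurable k)
    (hf01 : ∀ z, f z ∈ Set.Icc (0 : ℝ) 1)
    (hg01 : ∀ z, g z ∈ Set.Icc (0 : ℝ) 1)
    (hk01 : ∀ z, k z ∈ Set.Icc (0 : ℝ) 1)
    (d : ℝ)
    (hdiv_fg : |(∫ z, |f z - g z| ∂P) - ∫ z, |f z - g z| ∂Q| ≤ d / 2)
    (hdiv_fk : |(∫ z, |f z - k z| ∂P) - ∫ z, |f z - k z| ∂Q| ≤ d / 2) :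
    (∫ z, |f z - g z| ∂Q)
      ≤ (∫ z, |f z - k z| ∂P) + (1 / 2) * d
        + min (∫ z, |k z - g z| ∂P) (∫ z, |k z - g z| ∂Q) := by
  have bdd : ∀ (μ : Measure Z) [IsFiniteMeasure μ] {u : Z → ℝ},
      Measurable u → (∀ z, u z ∈ Set.Icc (0 : ℝ) 1) → Integrable u μ :=
    fun μ _ _ hu hu01 => .of_mem_Icc 0 1 hu.aemeasurable (ae_of_all _ hu01)
  -- Route through `P` (triangle inequality under `P`) or through `Q` (under `Q`);
  -- each route pays for one change of measure.
  have triangle_P := integral_abs_sub_le_add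
    ((bdd P hf hf01).sub (bdd P hk hk01)) ((bdd P hk hk01).sub (bdd P hg hg01))
  have triangle_Q := integral_abs_sub_le_add
    ((bdd Q hf hf01).sub (bdd Q hk hk01)) ((bdd Q hk hk01).sub (bdd Q hg hg01))
  have shift_fg := sub_le_of_abs_sub_le_left hdiv_fg
  have shift_fk := sub_le_of_abs_sub_le_left hdiv_fk
  rw [← min_add_add_left]
  exact le_min (by linarith) (by linarith)

/-- generalization bound with labeling-function shift.  With loss
`ℓ(a,b) = |a − b|`, `f` a hypothesis, `g` (resp. `k`) the labeling function under the
testing distribution `Q` (resp. training distribution `P`), and `d` the HΔH-divergence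
of a class containing `f, g, k` — so that the pairwise disagreement discrepancies
between `P` and `Q` are bounded by `d/2` — we have
`L_Q(f,g) ≤ L_P(f,k) + d/2 + min{E_P[|k−g|], E_Q[|k−g|]}`. -/
theorem multitask_core_bound {Z : Type*} [MeasurableSpace Z]
    (P Q : Measure Z) [IsProbabilityMeasure P] [IsProbabilityMeasure Q]
    (f g k : Z → ℝ)
    (hf : Measurable f) (hg : Measurable g) (hk : Measurable k)
    (hf01 : ∀ z, f z ∈ Set.Icc (0 : ℝ) 1)
    (hg01 : ∀ z, g z ∈ Set.Icc (0 : ℝ) 1)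
    (hk01 : ∀ z, k z ∈ Set.Icc (0 : ℝ) 1)
    (d : ℝ) (hd : 0 ≤ d)
    (hdiv_fg : |(∫ z, |f z - g z| ∂P) - ∫ z, |f z - g z| ∂Q| ≤ d / 2)
    (hdiv_fk : |(∫ z, |f z - k z| ∂P) - ∫ z, |f z - k z| ∂Q| ≤ d / 2) :
    (∫ z, |f z - g z| ∂Q)
      ≤ (∫ z, |f z - k z| ∂P) + (1 / 2) * d
        + min (∫ z, |k z - g z| ∂P) (∫ z, |k z - g z| ∂Q) :=
  multitask_core_bound_general P Q f g k hf hg hk hf01 hg01 hk01 d hdiv_fg hdiv_fk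
end

section
/- (Two-sided risk gap via conditional shift and HΔH-divergence) Let P, Q be distributions on feature space and f, g, k : X → [0,1] with all disagreement-loss discrepancies between P and Q bounded by (1/2)d for some d ≥ 0 (i.e., |E_P[ℓ(a,b)] − E_Q[ℓ(a,b)]| ≤ d/2 for the relevant pairs). Then |E_P[|f − k|] − E_Q[|f − g|]| ≤ min{ E_P[|k − g|], E_Q[|k − g|] } + d/2. -/
open MeasureTheory

lemma integrable_absdiff {Z : Type*} [MeasurableSpace Z] (P : Measure Z)
    [IsProbabilityMeasure P] {f g : Z → ℝ} (hf : Measurable f) (hg : Measurable g)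
    (hf01 : ∀ z, f z ∈ Set.Icc (0 : ℝ) 1) (hg01 : ∀ z, g z ∈ Set.Icc (0 : ℝ) 1) :
    Integrable (fun z => |f z - g z|) P := by
  have hm : Measurable (fun z => |f z - g z|) := (hf.sub hg).abs
  refine ⟨hm.aestronglyMeasurable, ?_⟩
  apply HasFiniteIntegral.of_bounded (C := 1)
  filter_upwards with z
  have h1 := hf01 z; have h2 := hg01 z
  simp only [Set.mem_Icc] at h1 h2
  rw [Real.norm_eq_abs, abs_abs]
  rw [abs_sub_le_iff]; constructor <;> linarith

lemma perturb {Z : Type*} [MeasurableSpace Z] (P : Measure Z)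
    [IsProbabilityMeasure P] {f g k : Z → ℝ} (hf : Measurable f) (hg : Measurable g)
    (hk : Measurable k)
    (hf01 : ∀ z, f z ∈ Set.Icc (0 : ℝ) 1) (hg01 : ∀ z, g z ∈ Set.Icc (0 : ℝ) 1)
    (hk01 : ∀ z, k z ∈ Set.Icc (0 : ℝ) 1) :
    |(∫ z, |f z - k z| ∂P) - ∫ z, |f z - g z| ∂P| ≤ ∫ z, |k z - g z| ∂P := by
  have ifk := integrable_absdiff P hf hk hf01 hk01
  have ifg := integrable_absdiff P hf hg hf01 hg01
  have ikg := integrable_absdiff P hk hg hk01 hg01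
  rw [← integral_sub ifk ifg]
  calc |∫ z, (|f z - k z| - |f z - g z|) ∂P|
      ≤ ∫ z, |(|f z - k z| - |f z - g z|)| ∂P := by simpa [Real.norm_eq_abs] using norm_integral_le_integral_norm (μ := P) (f := fun z => |f z - k z| - |f z - g z|)
    _ ≤ ∫ z, |k z - g z| ∂P := by
        apply integral_mono_of_nonneg (Filter.Eventually.of_forall fun z => abs_nonneg _) ikg
        filter_upwards with z
        have := abs_abs_sub_abs_le_abs_sub (f z - k z) (f z - g z)
        simpa [abs_sub_comm] using this.trans_eq (by ring_nf)

/-- two-sided risk gap via conditional shift and HΔH-divergence: if the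
disagreement-loss discrepancies between `P` and `Q` for the pairs `(f,g)` and `(f,k)`
are bounded by `d/2`, then
`|E_P[|f − k|] − E_Q[|f − g|]| ≤ min{E_P[|k − g|], E_Q[|k − g|]} + d/2`. -/
theorem two_sided_risk_gap {Z : Type*} [MeasurableSpace Z]
    (P Q : Measure Z) [IsProbabilityMeasure P] [IsProbabilityMeasure Q]
    (f g k : Z → ℝ)
    (hf : Measurable f) (hg : Measurable g) (hk : Measurable k)
    (hf01 : ∀ z, f z ∈ Set.Icc (0 : ℝ) 1)
    (hg01 : ∀ z, g z ∈ Set.Icc (0 : ℝ) 1)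
    (hk01 : ∀ z, k z ∈ Set.Icc (0 : ℝ) 1)
    (d : ℝ) (hd : 0 ≤ d)
    (hdiv_fg : |(∫ z, |f z - g z| ∂P) - ∫ z, |f z - g z| ∂Q| ≤ d / 2)
    (hdiv_fk : |(∫ z, |f z - k z| ∂P) - ∫ z, |f z - k z| ∂Q| ≤ d / 2) :
    |(∫ z, |f z - k z| ∂P) - ∫ z, |f z - g z| ∂Q|
      ≤ min (∫ z, |k z - g z| ∂P) (∫ z, |k z - g z| ∂Q) + d / 2 := by
  have hP := perturb P hf hg hk hf01 hg01 hk01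
  have hQ := perturb Q hf hg hk hf01 hg01 hk01
  rcases min_cases (∫ z, |k z - g z| ∂P) (∫ z, |k z - g z| ∂Q) with ⟨h, _⟩ | ⟨h, _⟩ <;> rw [h]
  · calc |(∫ z, |f z - k z| ∂P) - ∫ z, |f z - g z| ∂Q|
        ≤ |(∫ z, |f z - k z| ∂P) - ∫ z, |f z - g z| ∂P|
          + |(∫ z, |f z - g z| ∂P) - ∫ z, |f z - g z| ∂Q| := abs_sub_le _ _ _
      _ ≤ (∫ z, |k z - g z| ∂P) + d / 2 := add_le_add hP hdiv_fg
  · calc |(∫ z, |f z - k z| ∂P) - ∫ z, |f z - g z| ∂Q|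
        ≤ |(∫ z, |f z - k z| ∂P) - ∫ z, |f z - k z| ∂Q|
          + |(∫ z, |f z - k z| ∂Q) - ∫ z, |f z - g z| ∂Q| := abs_sub_le _ _ _
      _ ≤ d / 2 + ∫ z, |k z - g z| ∂Q := add_le_add hdiv_fk hQ
      _ = (∫ z, |k z - g z| ∂Q) + d / 2 := add_comm _ _
end
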